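/- Let M be a loopless matroid on a finite ground set E and let ω ∈ ℝ^E. Then for every e ∈ E, the subdominant M-ultrametric satisfies ω^M_e = max over all cocircuits C* of M containing e of (min_{f ∈ C*} ω_f). (The 'blue rule' computes the subdominant M-ultrametric.) -/

import Mathlib

open scoped Classical

variable {α : Type*}

/-- The ω-weight of a set of elements: the sum of ω over the set. -/
noncomputable def wSum (ω : α → ℝ) (B : Set α) : ℝ := ∑ᶠ e ∈ B, ω e

/-- `B` is an ω-minimum basis of `M`: a basis whose ω-weight is minimum among all bases. -/
def IsMinBase [Fintype α] (M : Matroid α) (ω : α → ℝ) (B : Set α) : Prop :=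
  M.IsBase B ∧ ∀ B' : Set α, M.IsBase B' → wSum ω B ≤ wSum ω B'

/-- `ω` lies in the Bergman fan of `M`: every element lies in some ω-minimum basis. -/
def InBergmanFan [Fintype α] (M : Matroid α) (ω : α → ℝ) : Prop :=
  ∀ e : α, ∃ B : Set α, IsMinBase M ω B ∧ e ∈ B

/-- `C` is a circuit of `M`: a minimal dependent set. -/
def IsCircuit (M : Matroid α) (C : Set α) : Prop := Minimal M.Dep C

/-- A cocircuit of `M` is a circuit of the dual matroid `M✶`. -/
def IsCocircuit (M : Matroid α) (C : Set α) : Prop := IsCircuit M✶ C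

/-!
Write `β(e)` for the max-min value on the right. If `u ≤ ω` is an `M`-ultrametric and `B` is a
`u`-minimum basis containing `e`, then every `f` in the fundamental cocircuit of `e` with respect
to `B` can replace `e` in `B`, so `u e ≤ u f ≤ ω f`; hence `u e ≤ β(e)`. Conversely `β ≤ ω`, and
`β` is itself an `M`-ultrametric: if the cocircuit `K` realises `β(e)`, then `e` minimises `β`
on `K`, and an element minimising a weight on a cocircuit lies in a minimum basis (the blue rule:
the fundamental circuit of `e` meets `K` in a second element `g`, which `e` can replace).
-/

open Set

lemma wSum_insert_sdiff_singleton (ω : α → ℝ) {B : Set α} (hB : B.Finite) {e f : α}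
    (he : e ∈ B) (hf : f ∉ B) :
    wSum ω (insert f B \ {e}) = wSum ω B - ω e + ω f := by
  have hfin : (insert f B \ {e}).Finite := (hB.insert f).subset sdiff_subset
  have hsplit : wSum ω (insert f B) = ω e + wSum ω (insert f B \ {e}) := by
    conv_lhs => rw [← insert_sdiff_self_of_mem (mem_insert_of_mem f he)]
    exact finsum_mem_insert ω (fun h => h.2 rfl) hfin
  have hinsert : wSum ω (insert f B) = ω f + wSum ω B := finsum_mem_insert ω hf hB
  linarith

lemma Matroid.IsBase.exchange_isBase_of_mem_fundCircuit {M : Matroid α} {B : Set α} {e f : α}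
    (hB : M.IsBase B) (he : e ∈ B) (hfE : f ∈ M.E) (hfB : f ∉ B)
    (hef : e ∈ M.fundCircuit f B) : M.IsBase (insert f B \ {e}) :=
  hB.exchange_isBase_of_indep' he hfB <|
    (hB.indep.mem_fundCircuit_iff (by rwa [hB.closure_eq]) hfB).1 hef

section MinBase

variable [Fintype α] {M : Matroid α} {u : α → ℝ} {B : Set α} {e f : α}

lemma exists_isMinBase (M : Matroid α) (u : α → ℝ) : ∃ B, IsMinBase M u B := by
  obtain ⟨B₀, hB₀⟩ := M.exists_isBase
  obtain ⟨B, hB, hmin⟩ := exists_min_image {B | M.IsBase B} (wSum u) (toFinite _) ⟨B₀, hB₀⟩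
  exact ⟨B, hB, hmin⟩

lemma IsMinBase.le_of_exchange (hB : IsMinBase M u B) (he : e ∈ B) (hf : f ∉ B)
    (hB' : M.IsBase (insert f B \ {e})) : u e ≤ u f := by
  have := hB.2 _ hB'
  rw [wSum_insert_sdiff_singleton u (toFinite B) he hf] at this
  linarith

lemma IsMinBase.exchange (hB : IsMinBase M u B) (he : e ∈ B) (hf : f ∉ B)
    (hB' : M.IsBase (insert f B \ {e})) (hfe : u f ≤ u e) :
    IsMinBase M u (insert f B \ {e}) := by
  refine ⟨hB', fun B'' hB'' => le_trans ?_ (hB.2 B'' hB'')⟩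
  rw [wSum_insert_sdiff_singleton u (toFinite B) he hf]
  linarith

lemma IsMinBase.le_of_mem_fundCocircuit (hB : IsMinBase M u B) (he : e ∈ B)
    (hf : f ∈ M.fundCocircuit e B) : u e ≤ u f := by
  obtain rfl | hfe := eq_or_ne f e
  · exact le_rfl
  have hfB : f ∉ B := fun hfB => by
    have hfKB : f ∈ M.fundCocircuit e B ∩ B := ⟨hf, hfB⟩
    rw [M.fundCocircuit_inter_eq he] at hfKB
    exact hfe hfKB
  have hfE : f ∈ M.E := (Matroid.fundCocircuit_isCocircuit he hB.1).subset_ground hf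
  exact hB.le_of_exchange he hfB <| hB.1.exchange_isBase_of_mem_fundCircuit he hfE hfB <|
    hB.1.mem_fundCocircuit_iff_mem_fundCircuit.1 hf

lemma exists_isMinBase_mem_of_isCocircuit {K : Set α} (hK : M.IsCocircuit K) (heK : e ∈ K)
    (hmin : ∀ f ∈ K, u e ≤ u f) : ∃ B, IsMinBase M u B ∧ e ∈ B := by
  obtain ⟨B, hB⟩ := exists_isMinBase M u
  by_cases heB : e ∈ B
  · exact ⟨B, hB, heB⟩
  have heE : e ∈ M.E := hK.subset_ground heK
  have hC : M.IsCircuit (M.fundCircuit e B) := hB.1.fundCircuit_isCircuit heE heB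
  obtain ⟨g, ⟨hgC, hgK⟩, hge⟩ :=
    (hC.isCocircuit_inter_nontrivial hK ⟨e, M.mem_fundCircuit e B, heK⟩).exists_ne e
  have hgB : g ∈ B := (mem_insert_iff.1 (M.fundCircuit_subset_insert e B hgC)).resolve_left hge
  have hB' : M.IsBase (insert e B \ {g}) :=
    hB.1.exchange_isBase_of_mem_fundCircuit hgB heE heB hgC
  exact ⟨_, hB.exchange hgB heB hB' (hmin g hgK), mem_sdiff_of_mem (mem_insert e B) hge.symm⟩

lemma InBergmanFan.isNonloop (hu : InBergmanFan M u) (e : α) : M.IsNonloop e := by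
  obtain ⟨B, hB, heB⟩ := hu e
  exact hB.1.indep.isNonloop_of_mem heB

end MinBase

def cocircuitMins (M : Matroid α) (ω : α → ℝ) (e : α) : Set ℝ :=
  {r : ℝ | ∃ C : Set α, IsCocircuit M C ∧ e ∈ C ∧ r = sInf (ω '' C)}

/-- As `sSup ∅ = 0`, this is `0` when no cocircuit contains `e`. -/
noncomputable def blueValue (M : Matroid α) (ω : α → ℝ) (e : α) : ℝ :=
  sSup (cocircuitMins M ω e)

section BlueValue

variable [Finite α] {M : Matroid α} {ω : α → ℝ} {e : α}

lemma finite_cocircuitMins (M : Matroid α) (ω : α → ℝ) (e : α) :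
    (cocircuitMins M ω e).Finite :=
  ((toFinite {C : Set α | IsCocircuit M C}).image fun C => sInf (ω '' C)).subset <| by
    rintro r ⟨C, hC, -, rfl⟩
    exact ⟨C, hC, rfl⟩

lemma sInf_image_le_blueValue {K : Set α} (hK : M.IsCocircuit K) (heK : e ∈ K) :
    sInf (ω '' K) ≤ blueValue M ω e :=
  le_csSup (finite_cocircuitMins M ω e).bddAbove ⟨K, hK, heK, rfl⟩

lemma Matroid.IsNonloop.exists_isCocircuit_blueValue_eq (he : M.IsNonloop e) :
    ∃ K, M.IsCocircuit K ∧ e ∈ K ∧ blueValue M ω e = sInf (ω '' K) := by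
  obtain ⟨K, hK, heK⟩ := he.exists_mem_isCocircuit
  exact Set.Nonempty.csSup_mem (s := cocircuitMins M ω e) ⟨_, K, hK, heK, rfl⟩
    (finite_cocircuitMins M ω e)

lemma Matroid.IsNonloop.blueValue_le (he : M.IsNonloop e) : blueValue M ω e ≤ ω e := by
  obtain ⟨K, -, heK, hval⟩ := he.exists_isCocircuit_blueValue_eq (ω := ω)
  rw [hval]
  exact csInf_le ((toFinite K).image ω).bddBelow (mem_image_of_mem ω heK)

end BlueValue

lemma inBergmanFan_blueValue [Fintype α] {M : Matroid α} (hM : ∀ e, M.IsNonloop e)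
    (ω : α → ℝ) : InBergmanFan M (blueValue M ω) := by
  intro e
  obtain ⟨K, hK, heK, hval⟩ := (hM e).exists_isCocircuit_blueValue_eq (ω := ω)
  exact exists_isMinBase_mem_of_isCocircuit hK heK fun f hfK =>
    hval ▸ sInf_image_le_blueValue hK hfK

lemma InBergmanFan.le_blueValue [Fintype α] {M : Matroid α} {u ω : α → ℝ}
    (hu : InBergmanFan M u) (huω : ∀ e, u e ≤ ω e) (e : α) : u e ≤ blueValue M ω e := by
  obtain ⟨B, hB, heB⟩ := hu e
  have hK := Matroid.fundCocircuit_isCocircuit heB hB.1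
  refine le_trans ?_ (sInf_image_le_blueValue hK (M.mem_fundCocircuit e B))
  refine le_csInf ⟨ω e, mem_image_of_mem ω (M.mem_fundCocircuit e B)⟩ ?_
  rintro _ ⟨f, hf, rfl⟩
  exact (hB.le_of_mem_fundCocircuit heB hf).trans (huω f)

theorem stmt4_general [Fintype α] (M : Matroid α) (ω usub : α → ℝ)
    (h1 : InBergmanFan M usub) (h2 : ∀ e, usub e ≤ ω e)
    (h3 : ∀ u : α → ℝ, InBergmanFan M u → (∀ e, u e ≤ ω e) → ∀ e, u e ≤ usub e) :
    ∀ e : α, usub e =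
      sSup {r : ℝ | ∃ C : Set α, IsCocircuit M C ∧ e ∈ C ∧ r = sInf (ω '' C)} := fun e =>
  le_antisymm (h1.le_blueValue h2 e)
    (h3 _ (inBergmanFan_blueValue h1.isNonloop ω) (fun f => (h1.isNonloop f).blueValue_le) e)

/-- **blue rule.** For a loopless matroid M and ω ∈ ℝ^E, the subdominant
M-ultrametric satisfies, for every e,
ω^M_e = max over cocircuits C* containing e of (min_{f ∈ C*} ω_f). -/
theorem stmt4 [Fintype α] (M : Matroid α) (hE : M.E = Set.univ)
    (hloopless : ∀ e : α, M.Indep {e}) (ω usub : α → ℝ)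
    (h1 : InBergmanFan M usub) (h2 : ∀ e, usub e ≤ ω e)
    (h3 : ∀ u : α → ℝ, InBergmanFan M u → (∀ e, u e ≤ ω e) → ∀ e, u e ≤ usub e) :
    ∀ e : α, usub e =
      sSup {r : ℝ | ∃ C : Set α, IsCocircuit M C ∧ e ∈ C ∧ r = sInf (ω '' C)} :=
  stmt4_general M ω usub h1 h2 h3
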